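/- arXiv:1710.01426 — 2 statements merged into one kernel-verified Lean document; each statement's English description precedes it below -/
import Mathlib

section
/- Let V be a finite-dimensional complex vector space, Θ : V → V a conjugate-linear map with Θ(Θv) = -v for all v, and H : V → V a ℂ-linear endomorphism commuting with Θ, i.e. H(Θv) = Θ(Hv) for all v. Then for every real number E, the complex dimension of the eigenspace {v ∈ V : Hv = E • v} is even. -/
open Module

universe u

private theorem kramers_aux : ∀ n : ℕ, ∀ (W : Type u) (_ : AddCommGroup W),
    ∀ (_ : Module ℂ W) (_ : FiniteDimensional ℂ W), finrank ℂ W = n →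
    ∀ Θ : W → W, (∀ u v, Θ (u + v) = Θ u + Θ v) →
    (∀ (c : ℂ) (v : W), Θ (c • v) = (starRingEnd ℂ c) • Θ v) →
    (∀ v, Θ (Θ v) = -v) → Even n := by
  intro n
  induction n using Nat.strong_induction_on with
  | _ n IH =>
    intro W _ _ _ hrank Θ hadd hsmul hsq
    rcases Nat.eq_zero_or_pos n with h0 | hpos
    · simp [h0]
    have hnt : Nontrivial W := by
      rw [← Module.finrank_pos_iff (R := ℂ)]; omega
    obtain ⟨v, hv⟩ := exists_ne (0 : W)
    -- basic facts about Θ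
    have hΘ0 : Θ 0 = 0 := by
      have h := hadd 0 0
      rw [add_zero] at h
      exact add_eq_left.mp h.symm
    have hΘneg : ∀ x : W, Θ (-x) = -Θ x := by
      intro x
      have := hsmul (-1) x
      simpa using this
    have hΘsub : ∀ x y : W, Θ (x - y) = Θ x - Θ y := by
      intro x y
      rw [sub_eq_add_neg, hadd, hΘneg, sub_eq_add_neg]
    -- Θ v is not a multiple of v
    have hne : ∀ c : ℂ, Θ v ≠ c • v := by
      intro c hc
      have h2 := hsq v
      rw [hc, hsmul, hc, smul_smul] at h2
      have h3 : ((starRingEnd ℂ) c * c + 1) • v = 0 := by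
        rw [add_smul, one_smul, h2]; simp
      have h4 : (starRingEnd ℂ) c * c + 1 ≠ 0 := by
        intro h
        have := congrArg Complex.re h
        simp [Complex.mul_re, Complex.conj_re, Complex.conj_im] at this
        nlinarith [sq_nonneg c.re, sq_nonneg c.im]
      exact hv ((smul_eq_zero.mp h3).resolve_left h4)
    have hli : LinearIndependent ℂ ![v, Θ v] := by
      rw [LinearIndependent.pair_iff]
      intro s t hst
      by_cases ht : t = 0
      · subst ht
        simp only [zero_smul, add_zero] at hst
        exact ⟨(smul_eq_zero.mp hst).resolve_right hv, rfl⟩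
      · exfalso
        apply hne (-(s / t))
        have h := congrArg (fun z => t⁻¹ • z) hst
        simp only [smul_add, smul_smul, smul_zero] at h
        rw [inv_mul_cancel₀ ht, one_smul] at h
        rw [eq_neg_of_add_eq_zero_right h, ← neg_smul]
        congr 1
        field_simp
    set p : Submodule ℂ W := Submodule.span ℂ (Set.range ![v, Θ v]) with hp
    have hvp : v ∈ p := Submodule.subset_span ⟨0, rfl⟩
    have hΘvp : Θ v ∈ p := Submodule.subset_span ⟨1, rfl⟩
    have hmap : ∀ x ∈ p, Θ x ∈ p := by
      intro x hx
      induction hx using Submodule.span_induction with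
      | mem x hx =>
        obtain ⟨i, rfl⟩ := hx
        fin_cases i
        · exact hΘvp
        · show Θ (Θ v) ∈ p
          rw [hsq]
          exact p.neg_mem hvp
      | zero => rw [hΘ0]; exact p.zero_mem
      | add x y _ _ hx hy => rw [hadd]; exact p.add_mem hx hy
      | smul c x _ hx => rw [hsmul]; exact p.smul_mem _ hx
    have hpr : finrank ℂ p = 2 := by
      rw [hp, finrank_span_eq_card hli]
      simp
    -- quotient
    set Θbar : (W ⧸ p) → (W ⧸ p) := fun x => Quotient.liftOn' x
      (fun w => Submodule.Quotient.mk (Θ w))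
      (fun a b hab => by
        have hab' : a - b ∈ p := (Submodule.quotientRel_def p).mp hab
        refine (Submodule.Quotient.eq p).mpr ?_
        rw [← hΘsub]
        exact hmap _ hab') with hΘbar
    have hmk : ∀ x : W, Θbar (Submodule.Quotient.mk x) = Submodule.Quotient.mk (Θ x) :=
      fun x => rfl
    have hq := Submodule.finrank_quotient_add_finrank p
    rw [hrank, hpr] at hq
    have hlt : finrank ℂ (W ⧸ p) < n := by omega
    have heven := IH (finrank ℂ (W ⧸ p)) hlt (W ⧸ p) _ _ inferInstance rfl Θbar
      (fun x y => by
        induction x using Quotient.inductionOn' with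
        | h x =>
        induction y using Quotient.inductionOn' with
        | h y =>
        show Θbar (Submodule.Quotient.mk x + Submodule.Quotient.mk y)
          = Θbar (Submodule.Quotient.mk x) + Θbar (Submodule.Quotient.mk y)
        rw [← Submodule.Quotient.mk_add, hmk, hmk, hmk, hadd, Submodule.Quotient.mk_add])
      (fun c x => by
        induction x using Quotient.inductionOn' with
        | h x =>
        show Θbar (c • Submodule.Quotient.mk x)
          = (starRingEnd ℂ) c • Θbar (Submodule.Quotient.mk x)
        rw [← Submodule.Quotient.mk_smul, hmk, hmk, hsmul, Submodule.Quotient.mk_smul])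
      (fun x => by
        induction x using Quotient.inductionOn' with
        | h x =>
        show Θbar (Θbar (Submodule.Quotient.mk x)) = -(Submodule.Quotient.mk x)
        rw [hmk, hmk, hsq, Submodule.Quotient.mk_neg])
    rw [Nat.even_iff] at heven ⊢
    omega

/-- If `V` is a finite-dimensional complex vector space, `Θ : V → V` is a
conjugate-linear map with `Θ(Θv) = -v`, and `H` is a `ℂ`-linear endomorphism of `V`
commuting with `Θ`, then for every real `E` the complex dimension of the eigenspace
`{v : Hv = E • v}` is even (Kramers degeneracy). -/
theorem kramers_eigenspace_dim_even
    {V : Type*} [AddCommGroup V] [Module ℂ V] [FiniteDimensional ℂ V]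
    (Θ : V → V)
    (hΘadd : ∀ u v, Θ (u + v) = Θ u + Θ v)
    (hΘsmul : ∀ (c : ℂ) (v : V), Θ (c • v) = (starRingEnd ℂ c) • Θ v)
    (hΘsq : ∀ v : V, Θ (Θ v) = -v)
    (H : V →ₗ[ℂ] V)
    (hcomm : ∀ v : V, H (Θ v) = Θ (H v))
    (E : ℝ) :
    Even (Module.finrank ℂ (Module.End.eigenspace H (E : ℂ))) := by
  set W := Module.End.eigenspace H (E : ℂ) with hW
  have hmem : ∀ w : V, w ∈ W → Θ w ∈ W := by
    intro w hw
    rw [hW, Module.End.mem_eigenspace_iff] at hw ⊢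
    rw [hcomm, hw, hΘsmul]
    rw [Complex.conj_ofReal]
  set Θ' : W → W := fun w => ⟨Θ w, hmem w w.2⟩ with hΘ'
  exact kramers_aux (finrank ℂ W) W _ _ inferInstance rfl Θ'
    (fun u v => Subtype.ext (hΘadd u v))
    (fun c v => Subtype.ext (hΘsmul c v))
    (fun v => Subtype.ext (hΘsq v))
end

section
/- Let n ≥ 1, let ε ∈ {1, -1}, and let w : ℝ → Matrix(n, n, ℂ) be a continuously differentiable matrix-valued function such that w(t) is invertible for every t, w(t + 2π) = w(t) for all t (periodicity), and w(-t) = ε • (w(t))ᵀ for all t (the compatibility condition induced by the momentum-space involution τ(x) = -x). Then the winding integral vanishes: ∫₀^{2π} trace((w(t))⁻¹ · w′(t)) dt = 0. In particular, the one-dimensional odd topological index ind_t(w) = (1/2π) ∫ tr(w⁻¹ dw) is identified with its own negative, so it is naturally ℤ₂-valued. -/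
open scoped Matrix

attribute [local instance] Matrix.linftyOpNormedAddCommGroup Matrix.linftyOpNormedSpace
attribute [local instance] Matrix.linftyOpNormedRing Matrix.linftyOpNormedAlgebra

/-- Let `n ≥ 1`, `ε = ±1`, and let `w : ℝ → Matrix n n ℂ` be a `C¹`
family of invertible matrices that is `2π`-periodic and satisfies the compatibility
condition `w(-t) = ε • (w(t))ᵀ` induced by the momentum-space involution `τ(x) = -x`.
Then the winding integral vanishes: `∫₀^{2π} tr(w(t)⁻¹ ⬝ w'(t)) dt = 0`; hence the
one-dimensional odd topological index `(1/2π) ∫ tr(w⁻¹ dw)` equals its own negative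
and is naturally `ℤ₂`-valued. -/
theorem winding_integral_vanishes_under_involutive_compatibility
    (n : ℕ) (hn : 1 ≤ n) (ε : ℂ) (hε : ε = 1 ∨ ε = -1)
    (w : ℝ → Matrix (Fin n) (Fin n) ℂ)
    (hC1 : ContDiff ℝ 1 w)
    (hinv : ∀ t, IsUnit (w t))
    (hper : ∀ t, w (t + 2 * Real.pi) = w t)
    (hcompat : ∀ t, w (-t) = ε • (w t)ᵀ) :
    ∫ t in (0 : ℝ)..(2 * Real.pi), Matrix.trace ((w t)⁻¹ * deriv w t) = 0 := by
  have hε2 : ε * ε = 1 := by rcases hε with h | h <;> simp [h]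
  have hεne : ε ≠ 0 := by rcases hε with h | h <;> simp [h]
  -- differentiability
  have hdiff : Differentiable ℝ w := hC1.differentiable one_ne_zero
  have hd : ∀ t, HasDerivAt w (deriv w t) t := fun t => (hdiff t).hasDerivAt
  -- continuous linear map A ↦ ε • Aᵀ
  set L : Matrix (Fin n) (Fin n) ℂ →L[ℂ] Matrix (Fin n) (Fin n) ℂ :=
    LinearMap.toContinuousLinearMap
      (ε • (Matrix.transposeLinearEquiv (Fin n) (Fin n) ℂ ℂ).toLinearMap) with hL
  have hLapp : ∀ A : Matrix (Fin n) (Fin n) ℂ, L A = ε • Aᵀ := fun A => rfl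
  -- derivative relation
  have hderiv : ∀ t, deriv w (-t) = (-ε) • (deriv w t)ᵀ := by
    intro t
    have h1 : HasDerivAt (fun s => w (-s)) ((-1 : ℝ) • deriv w (-t)) t :=
      (hd (-t)).scomp t ((hasDerivAt_id t).neg)
    have h2 : HasDerivAt (fun s => L (w s)) (L (deriv w t)) t := by
      have := ((L.restrictScalars ℝ).hasFDerivAt (x := w t)).comp_hasDerivAt t (hd t)
      exact this
    have heq : (fun s => w (-s)) = fun s => L (w s) := by
      funext s; rw [hLapp, ← hcompat s]
    rw [heq] at h1
    have := h1.unique h2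
    have h3 : deriv w (-t) = -(L (deriv w t)) := by
      have : (-1 : ℝ) • deriv w (-t) = L (deriv w t) := this
      rw [← this]; simp
    rw [h3, hLapp]; simp
  -- inverse of w(-t)
  have hinvneg : ∀ t, (w (-t))⁻¹ = ε • ((w t)⁻¹)ᵀ := by
    intro t
    rw [hcompat t]
    apply Matrix.inv_eq_left_inv
    rw [Matrix.smul_mul, Matrix.mul_smul, smul_smul, hε2, one_smul,
      ← Matrix.transpose_mul,
      Matrix.mul_nonsing_inv _ ((Matrix.isUnit_iff_isUnit_det _).mp (hinv t)),
      Matrix.transpose_one]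
  set f : ℝ → ℂ := fun t => Matrix.trace ((w t)⁻¹ * deriv w t) with hf
  -- f is odd
  have hodd : ∀ t, f (-t) = -f t := by
    intro t
    have : f (-t) = Matrix.trace ((ε • ((w t)⁻¹)ᵀ) * ((-ε) • (deriv w t)ᵀ)) := by
      rw [hf]; dsimp only; rw [hinvneg t, hderiv t]
    rw [this, Matrix.smul_mul, Matrix.mul_smul, smul_smul,
      ← Matrix.transpose_mul, Matrix.trace_smul, Matrix.trace_transpose,
      Matrix.trace_mul_comm]
    have : ε * -ε = -1 := by rw [mul_neg, hε2]
    rw [this, hf]; simp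
  -- f is continuous
  have hcderiv : Continuous (deriv w) := (hC1.iterate_deriv' 0 1).continuous
  have hcw : Continuous w := hC1.continuous
  have hcinv : Continuous fun t => (w t)⁻¹ := by
    have : (fun t => (w t)⁻¹) = fun t => (Ring.inverse (w t).det) • (w t).adjugate := by
      funext t; rw [Matrix.inv_def]
    rw [this]
    have hdet : ∀ t, (w t).det ≠ 0 := fun t =>
      ((Matrix.isUnit_iff_isUnit_det _).mp (hinv t)).ne_zero
    have : Continuous fun t => Ring.inverse (w t).det := by
      simp only [Ring.inverse_eq_inv']
      exact (hcw.matrix_det).inv₀ hdet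
    exact this.smul hcw.matrix_adjugate
  have hcf : Continuous f := (hcinv.matrix_mul hcderiv).matrix_trace
  -- periodicity of f
  have hperf : Function.Periodic f (2 * Real.pi) := by
    intro t
    have hdw : deriv w (t + 2 * Real.pi) = deriv w t := by
      have h := deriv_comp_add_const w (2 * Real.pi) t
      rw [show (fun x => w (x + 2 * Real.pi)) = w from funext hper] at h
      exact h.symm
    rw [hf]; dsimp only; rw [hper t, hdw]
  -- rewrite the integral over a symmetric interval
  have h1 : ∫ t in (0:ℝ)..(2 * Real.pi), f t = ∫ t in (-Real.pi)..Real.pi, f t := by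
    have h := hperf.intervalIntegral_add_eq 0 (-Real.pi)
    rw [zero_add] at h
    rw [h]
    congr 1
    ring
  have h2 : ∫ t in (-Real.pi)..Real.pi, f t = -∫ t in (-Real.pi)..Real.pi, f t := by
    have hcomp : (∫ x in (-Real.pi)..Real.pi, f (-x)) = ∫ x in (-Real.pi)..Real.pi, f x := by
      rw [intervalIntegral.integral_comp_neg]; norm_num
    calc ∫ t in (-Real.pi)..Real.pi, f t = ∫ t in (-Real.pi)..Real.pi, f (-t) := hcomp.symm
      _ = ∫ t in (-Real.pi)..Real.pi, -f t := by
          apply intervalIntegral.integral_congr; intro x _; exact hodd x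
      _ = -∫ t in (-Real.pi)..Real.pi, f t := intervalIntegral.integral_neg
  have : ∫ t in (-Real.pi)..Real.pi, f t = 0 := by linear_combination h2 / 2 -- complex
  calc ∫ t in (0:ℝ)..(2 * Real.pi), Matrix.trace ((w t)⁻¹ * deriv w t)
      = ∫ t in (0:ℝ)..(2 * Real.pi), f t := rfl
    _ = 0 := by rw [h1, this]
end
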